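/- Any hyperpath from p_0 to f in C(φ) containing the edge ({p_n}, {q_0}) contains all of the vertices p_0, p_1, ..., p_n and q_0, and for each i ∈ {1,...,m} exactly one of the three vertices q_{i,1}, q_{i,2}, q_{i,3} lies on its unique p_0-to-f path. -/

import Mathlib

/-- A directed hypergraph: finite vertex set, finite set of hyperedges,
each hyperedge `e = (T_e, H_e)` with tail `T_e ⊆ V`, head `H_e ⊆ V \ T_e`. -/
structure DiHypergraph (V : Type*) [DecidableEq V] where
  verts : Finset V
  edges : Finset (Finset V × Finset V)
  tail_sub : ∀ e ∈ edges, e.1 ⊆ verts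
  head_sub : ∀ e ∈ edges, e.2 ⊆ verts
  disj : ∀ e ∈ edges, Disjoint e.1 e.2

variable {V : Type*} [DecidableEq V]

/-- Subhypergraph relation. -/
def Subhg (H' H : DiHypergraph V) : Prop :=
  H'.verts ⊆ H.verts ∧ H'.edges ⊆ H.edges

/-- Union of the heads of a list of hyperedges. -/
def headsUnion (L : List (Finset V × Finset V)) : Finset V :=
  L.foldr (fun e acc => e.2 ∪ acc) ∅

/-- The hyperedges of `H'` can be ordered `⟨e_1, …, e_k⟩` so that
`T(e_i) ⊆ {s} ∪ H(e_1) ∪ ⋯ ∪ H(e_{i-1})` and `d ∈ H(e_k)`. -/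
def HasOrdering (H' : DiHypergraph V) (s d : V) : Prop :=
  ∃ L : List (Finset V × Finset V), L.Nodup ∧ L.toFinset = H'.edges ∧
    (∀ i : Fin L.length, (L.get i).1 ⊆ insert s (headsUnion (L.take (i : ℕ)))) ∧
    ∃ e, L.getLast? = some e ∧ d ∈ e.2

/-- A hyperpath from `s` to `d` in `H` is a subhypergraph of `H`, minimal with
respect to deletion of vertices and edges, admitting a valid edge ordering. -/
def IsHyperpath (H : DiHypergraph V) (s d : V) (H' : DiHypergraph V) : Prop :=
  Subhg H' H ∧ HasOrdering H' s d ∧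
    ∀ H'' : DiHypergraph V, Subhg H'' H' → HasOrdering H'' s d → H'' = H'

/-- `PathFrom H s d vs es` : `vs` and `es` form a (simple graph-style) path
`(v₁ = s, e₁, v₂, …, e_q, v_{q+1} = d)` with `vᵢ ∈ T(eᵢ)`, `v_{i+1} ∈ H(eᵢ)`,
all edges taken from `H`. -/
inductive PathFrom (H : DiHypergraph V) : V → V → List V → List (Finset V × Finset V) → Prop
  | single {s d : V} {e : Finset V × Finset V} :
      e ∈ H.edges → s ∈ e.1 → d ∈ e.2 → PathFrom H s d [s, d] [e]
  | cons {s v d : V} {vs : List V} {es : List (Finset V × Finset V)}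
      {e : Finset V × Finset V} :
      e ∈ H.edges → s ∈ e.1 → v ∈ e.2 → PathFrom H v d vs es →
      PathFrom H s d (s :: vs) (e :: es)

/-! ### The 3-SAT construction `C(φ)`

A 3-SAT instance with `n` variables and `m` clauses is `φ : Fin m → Fin 3 → Fin n × Bool`:
literal `j` of clause `i` is `(v, sign)`, positive if `sign = true`. -/

/-- An assignment `σ` satisfies the 3-SAT instance `φ`. -/
def SatAssign {n m : ℕ} (φ : Fin m → Fin 3 → Fin n × Bool) (σ : Fin n → Bool) : Prop :=
  ∀ i : Fin m, ∃ j : Fin 3, σ (φ i j).1 = (φ i j).2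

/-- Vertices of the construction `C(φ)`. -/
inductive Vtx (n m : ℕ) where
  | p (i : Fin (n + 1))
  | q0
  | q (i : Fin m) (j : Fin 3)
  | f
deriving DecidableEq, Fintype

/-- The edge assigning variable `v_i` the value `b`: tail `{p_{i-1}}`, head
`{p_i}` together with the `q`-vertices of the clause literals blocked by the
assignment (the occurrences of `v_i` with sign `!b`). -/
def varEdge {n m : ℕ} (φ : Fin m → Fin 3 → Fin n × Bool) (i : Fin n) (b : Bool) :
    Finset (Vtx n m) × Finset (Vtx n m) :=
  ({Vtx.p i.castSucc},
    insert (Vtx.p i.succ)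
      (((Finset.univ : Finset (Fin m × Fin 3)).filter
          (fun xy => φ xy.1 xy.2 = (i, !b))).image fun xy => Vtx.q xy.1 xy.2))

/-- The head of the clause edges for clause `i`: the three `q`-vertices of
clause `i+1`, or `{f}` for the last clause. -/
def nextQ {n m : ℕ} (i : Fin m) : Finset (Vtx n m) :=
  if h : (i : ℕ) + 1 < m then
    {Vtx.q ⟨(i : ℕ) + 1, h⟩ 0, Vtx.q ⟨(i : ℕ) + 1, h⟩ 1, Vtx.q ⟨(i : ℕ) + 1, h⟩ 2}
  else {Vtx.f}

/-- The edge choosing literal `j` to satisfy clause `i`. -/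
def clauseEdge {n m : ℕ} (i : Fin m) (j : Fin 3) :
    Finset (Vtx n m) × Finset (Vtx n m) :=
  ({Vtx.q i j}, nextQ i)

/-- The forced edge `({p_n}, {q_0})`. -/
def forcedEdge (n m : ℕ) : Finset (Vtx n m) × Finset (Vtx n m) :=
  ({Vtx.p (Fin.last n)}, {Vtx.q0})

/-- The connector edge `({q_0}, {q_{1,1}, q_{1,2}, q_{1,3}})`. -/
def q0Edge (n m : ℕ) : Finset (Vtx n m) × Finset (Vtx n m) :=
  ({Vtx.q0},
    if h : 0 < m then {Vtx.q ⟨0, h⟩ 0, Vtx.q ⟨0, h⟩ 1, Vtx.q ⟨0, h⟩ 2}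
    else {Vtx.f})

/-- The construction `C(φ)`. -/
def Cphi {n m : ℕ} (φ : Fin m → Fin 3 → Fin n × Bool) : DiHypergraph (Vtx n m) where
  verts := Finset.univ
  edges :=
    ((Finset.univ : Finset (Fin n × Bool)).image fun ib => varEdge φ ib.1 ib.2) ∪
    ((Finset.univ : Finset (Fin m × Fin 3)).image fun ij => clauseEdge ij.1 ij.2) ∪
    {forcedEdge n m, q0Edge n m}
  tail_sub := fun _ _ => Finset.subset_univ _
  head_sub := fun _ _ => Finset.subset_univ _
  disj := by
    intro e he
    simp only [Finset.mem_union, Finset.mem_image, Finset.mem_univ, true_and,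
      Finset.mem_insert, Finset.mem_singleton, Prod.exists] at he
    rcases he with (⟨i, b, rfl⟩ | ⟨i, j, rfl⟩) | (rfl | rfl)
    · simp only [varEdge, Finset.disjoint_singleton_left, Finset.mem_insert,
        Finset.mem_image, Finset.mem_filter, Finset.mem_univ, true_and, Prod.exists]
      rintro (h | ⟨x, y, _, h⟩)
      · exact absurd (Vtx.p.injEq .. ▸ congrArg id h)
          (by simpa using (Fin.castSucc_lt_succ : i.castSucc < i.succ).ne)
      · cases h
    · simp only [clauseEdge, nextQ, Finset.disjoint_singleton_left]
      split
      · simp only [Finset.mem_insert, Finset.mem_singleton]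
        rintro (h | h | h) <;>
          { injection h with h1 h2
            exact absurd (congrArg Fin.val h1) (by simp) }
      · simp
    · simp [forcedEdge]
    · simp only [q0Edge, Finset.disjoint_singleton_left]
      split <;> simp
section Aux

variable {V : Type*} [DecidableEq V]

lemma headsUnion_nil : headsUnion ([] : List (Finset V × Finset V)) = ∅ := rfl

lemma headsUnion_cons (a : Finset V × Finset V) (L : List (Finset V × Finset V)) :
    headsUnion (a :: L) = a.2 ∪ headsUnion L := rfl

lemma mem_headsUnion {L : List (Finset V × Finset V)} {v : V} :
    v ∈ headsUnion L ↔ ∃ e ∈ L, v ∈ e.2 := by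
  induction L with
  | nil => simp [headsUnion_nil]
  | cons a L ih => simp [headsUnion_cons, ih]

variable {n m : ℕ} {φ : Fin m → Fin 3 → Fin n × Bool}

lemma mem_Cphi {e : Finset (Vtx n m) × Finset (Vtx n m)} :
    e ∈ (Cphi φ).edges ↔ (∃ i b, e = varEdge φ i b) ∨ (∃ i j, e = clauseEdge i j) ∨
      e = forcedEdge n m ∨ e = q0Edge n m := by
  simp only [Cphi, Finset.mem_union, Finset.mem_image, Finset.mem_univ, true_and,
    Finset.mem_insert, Finset.mem_singleton, Prod.exists]
  constructor
  · rintro ((⟨a, b, rfl⟩ | ⟨a, b, rfl⟩) | (rfl | rfl))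
    · exact Or.inl ⟨a, b, rfl⟩
    · exact Or.inr (Or.inl ⟨a, b, rfl⟩)
    · exact Or.inr (Or.inr (Or.inl rfl))
    · exact Or.inr (Or.inr (Or.inr rfl))
  · rintro (⟨a, b, rfl⟩ | ⟨a, b, rfl⟩ | rfl | rfl)
    · exact Or.inl (Or.inl ⟨a, b, rfl⟩)
    · exact Or.inl (Or.inr ⟨a, b, rfl⟩)
    · exact Or.inr (Or.inl rfl)
    · exact Or.inr (Or.inr rfl)

lemma mem_head_varEdge {v : Vtx n m} {i b} :
    v ∈ (varEdge φ i b).2 ↔ v = Vtx.p i.succ ∨ ∃ x y, φ x y = (i, !b) ∧ v = Vtx.q x y := by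
  simp only [varEdge, Finset.mem_insert, Finset.mem_image, Finset.mem_filter, Finset.mem_univ,
    true_and, Prod.exists]
  constructor
  · rintro (rfl | ⟨x, y, hxy, rfl⟩)
    · exact Or.inl rfl
    · exact Or.inr ⟨x, y, hxy, rfl⟩
  · rintro (rfl | ⟨x, y, hxy, rfl⟩)
    · exact Or.inl rfl
    · exact Or.inr ⟨x, y, hxy, rfl⟩

lemma eq_of_q_mem_tail {e : Finset (Vtx n m) × Finset (Vtx n m)} {x y}
    (he : e ∈ (Cphi φ).edges) (h : Vtx.q x y ∈ e.1) : e = clauseEdge x y := by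
  rcases mem_Cphi.mp he with ⟨i, b, rfl⟩ | ⟨i, j, rfl⟩ | rfl | rfl
  · simp [varEdge] at h
  · simp only [clauseEdge, Finset.mem_singleton, Vtx.q.injEq] at h
    obtain ⟨rfl, rfl⟩ := h
    rfl
  · simp [forcedEdge] at h
  · simp [q0Edge] at h

lemma eq_of_q0_mem_tail {e : Finset (Vtx n m) × Finset (Vtx n m)}
    (he : e ∈ (Cphi φ).edges) (h : Vtx.q0 ∈ e.1) : e = q0Edge n m := by
  rcases mem_Cphi.mp he with ⟨i, b, rfl⟩ | ⟨i, j, rfl⟩ | rfl | rfl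
  · simp [varEdge] at h
  · simp [clauseEdge] at h
  · simp [forcedEdge] at h
  · rfl

lemma p_mem_tail_cases {e : Finset (Vtx n m) × Finset (Vtx n m)} {k}
    (he : e ∈ (Cphi φ).edges) (h : Vtx.p k ∈ e.1) :
    (∃ i b, e = varEdge φ i b ∧ k = i.castSucc) ∨ (e = forcedEdge n m ∧ k = Fin.last n) := by
  rcases mem_Cphi.mp he with ⟨i, b, rfl⟩ | ⟨i, j, rfl⟩ | rfl | rfl
  · simp only [varEdge, Finset.mem_singleton, Vtx.p.injEq] at h
    exact Or.inl ⟨i, b, rfl, h⟩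
  · simp [clauseEdge] at h
  · simp only [forcedEdge, Finset.mem_singleton, Vtx.p.injEq] at h
    exact Or.inr ⟨rfl, h⟩
  · simp [q0Edge] at h

lemma f_not_mem_tail {e : Finset (Vtx n m) × Finset (Vtx n m)}
    (he : e ∈ (Cphi φ).edges) : Vtx.f ∉ e.1 := by
  rcases mem_Cphi.mp he with ⟨i, b, rfl⟩ | ⟨i, j, rfl⟩ | rfl | rfl <;>
    simp [varEdge, clauseEdge, forcedEdge, q0Edge]

lemma p_mem_head {e : Finset (Vtx n m) × Finset (Vtx n m)} {k}
    (he : e ∈ (Cphi φ).edges) (h : Vtx.p k ∈ e.2) :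
    ∃ i b, e = varEdge φ i b ∧ k = i.succ := by
  rcases mem_Cphi.mp he with ⟨i, b, rfl⟩ | ⟨i, j, rfl⟩ | rfl | rfl
  · rcases mem_head_varEdge.mp h with h' | ⟨x, y, _, h'⟩
    · exact ⟨i, b, rfl, by injection h'⟩
    · exact absurd h' (by simp)
  · simp only [clauseEdge, nextQ] at h
    split at h <;> simp at h
  · simp [forcedEdge] at h
  · simp only [q0Edge] at h
    split at h <;> simp at h

lemma q0_mem_head {e : Finset (Vtx n m) × Finset (Vtx n m)}
    (he : e ∈ (Cphi φ).edges) (h : Vtx.q0 ∈ e.2) : e = forcedEdge n m := by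
  rcases mem_Cphi.mp he with ⟨i, b, rfl⟩ | ⟨i, j, rfl⟩ | rfl | rfl
  · rcases mem_head_varEdge.mp h with h' | ⟨x, y, _, h'⟩ <;> simp at h'
  · simp only [clauseEdge, nextQ] at h
    split at h <;> simp at h
  · rfl
  · simp only [q0Edge] at h
    split at h <;> simp at h

lemma f_mem_head {e : Finset (Vtx n m) × Finset (Vtx n m)}
    (he : e ∈ (Cphi φ).edges) (h : Vtx.f ∈ e.2) : e.2 = {Vtx.f} := by
  rcases mem_Cphi.mp he with ⟨i, b, rfl⟩ | ⟨i, j, rfl⟩ | rfl | rfl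
  · rcases mem_head_varEdge.mp h with h' | ⟨x, y, _, h'⟩ <;> simp at h'
  · simp only [clauseEdge, nextQ] at h ⊢
    split at h <;> simp_all
  · simp [forcedEdge] at h
  · simp only [q0Edge] at h ⊢
    split at h <;> simp_all

end Aux
section Aux2

variable {n m : ℕ} {φ : Fin m → Fin 3 → Fin n × Bool}

/-- A rank function certifying that `C(φ)` is layered/acyclic. -/
def rnk : Vtx n m → ℕ
  | .p i => i.val
  | .q0 => n + 1
  | .q i _ => n + 2 + i.val
  | .f => n + m + 2

lemma tail_singleton {e : Finset (Vtx n m) × Finset (Vtx n m)}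
    (he : e ∈ (Cphi φ).edges) : ∃ v, e.1 = {v} := by
  rcases mem_Cphi.mp he with ⟨i, b, rfl⟩ | ⟨i, j, rfl⟩ | rfl | rfl <;>
    exact ⟨_, rfl⟩

lemma rnk_lt {e : Finset (Vtx n m) × Finset (Vtx n m)} {v w : Vtx n m}
    (he : e ∈ (Cphi φ).edges) (hv : v ∈ e.1) (hw : w ∈ e.2) :
    rnk v < rnk w := by
  rcases mem_Cphi.mp he with ⟨i, b, rfl⟩ | ⟨i, j, rfl⟩ | rfl | rfl
  · simp only [varEdge, Finset.mem_singleton] at hv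
    subst hv
    rcases mem_head_varEdge.mp hw with rfl | ⟨x, y, _, rfl⟩
    · simp [rnk]
    · have := i.isLt
      simp only [rnk, Fin.coe_castSucc]
      omega
  · simp only [clauseEdge, Finset.mem_singleton] at hv
    subst hv
    simp only [clauseEdge, nextQ] at hw
    split at hw
    · rcases Finset.mem_insert.mp hw with rfl | hw
      · simp [rnk]
      · rcases Finset.mem_insert.mp hw with rfl | hw
        · simp [rnk]
        · rw [Finset.mem_singleton] at hw
          subst hw
          simp [rnk]
    · rw [Finset.mem_singleton] at hw
      subst hw
      have := i.isLt
      simp only [rnk]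
      omega
  · simp only [forcedEdge, Finset.mem_singleton] at hv hw
    subst hv
    subst hw
    simp [rnk, Fin.last]
  · simp only [q0Edge, Finset.mem_singleton] at hv
    subst hv
    simp only [q0Edge] at hw
    split at hw
    · rcases Finset.mem_insert.mp hw with rfl | hw
      · simp [rnk]
      · rcases Finset.mem_insert.mp hw with rfl | hw
        · simp [rnk]
        · rw [Finset.mem_singleton] at hw
          subst hw
          simp [rnk]
    · rw [Finset.mem_singleton] at hw
      subst hw
      simp only [rnk]
      omega

/-- Key of an edge: rank of its (unique) tail vertex. -/
noncomputable def ekey (e : Finset (Vtx n m) × Finset (Vtx n m)) : ℕ := e.1.sup rnk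

lemma ekey_eq {e : Finset (Vtx n m) × Finset (Vtx n m)} {v : Vtx n m}
    (he : e ∈ (Cphi φ).edges) (hv : v ∈ e.1) : ekey e = rnk v := by
  obtain ⟨w, hw⟩ := tail_singleton (φ := φ) he
  rw [hw, Finset.mem_singleton] at hv
  subst hv
  show e.1.sup rnk = _
  rw [hw]
  exact Finset.sup_singleton

lemma ekey_lt {e e' : Finset (Vtx n m) × Finset (Vtx n m)} {v : Vtx n m}
    (he : e ∈ (Cphi φ).edges) (he' : e' ∈ (Cphi φ).edges)
    (hv : v ∈ e.1) (hv' : v ∈ e'.2) : ekey e' < ekey e := by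
  obtain ⟨w, hw⟩ := tail_singleton (φ := φ) he'
  rw [ekey_eq (φ := φ) he hv, ekey_eq (φ := φ) he' (hw ▸ Finset.mem_singleton_self w)]
  exact rnk_lt (φ := φ) he' (hw ▸ Finset.mem_singleton_self w) hv'

/-- Existence of a valid ordering for any "covered" edge set with an `f`-edge. -/
lemma ord_exists {E : Finset (Finset (Vtx n m) × Finset (Vtx n m))}
    (hE : E ⊆ (Cphi φ).edges)
    (hcov : ∀ e ∈ E, ∀ v ∈ e.1, v = Vtx.p 0 ∨ ∃ e' ∈ E, v ∈ e'.2)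
    {ef} (hef : ef ∈ E) (hf : Vtx.f ∈ ef.2) :
    ∃ L : List (Finset (Vtx n m) × Finset (Vtx n m)), L.Nodup ∧ L.toFinset = E ∧
      (∀ i : Fin L.length, (L.get i).1 ⊆ insert (Vtx.p 0) (headsUnion (L.take (i : ℕ)))) ∧
      ∃ e, L.getLast? = some e ∧ Vtx.f ∈ e.2 := by
  classical
  set le : (Finset (Vtx n m) × Finset (Vtx n m)) → (Finset (Vtx n m) × Finset (Vtx n m)) → Bool :=
    fun a b => decide (ekey a ≤ ekey b) with hle
  set L0 : List (Finset (Vtx n m) × Finset (Vtx n m)) :=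
    ((E.erase ef).toList).mergeSort le with hL0
  have hperm : L0.Perm (E.erase ef).toList := List.mergeSort_perm _ _
  have hL0mem : ∀ {e}, e ∈ L0 ↔ (e ∈ E ∧ e ≠ ef) := by
    intro e
    rw [hperm.mem_iff, Finset.mem_toList, Finset.mem_erase, and_comm]
  have hL0nd : L0.Nodup := hperm.nodup_iff.mpr (Finset.nodup_toList _)
  have hsorted : L0.Pairwise (fun a b => ekey a ≤ ekey b) := by
    have := List.pairwise_mergeSort (le := le)
      (fun a b c hab hbc => by simp only [hle, decide_eq_true_eq] at *; omega)
      (fun a b => by simp only [hle, Bool.or_eq_true, decide_eq_true_eq]; omega)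
      ((E.erase ef).toList)
    refine List.Pairwise.imp ?_ this
    intro a b h
    simpa [hle] using h
  refine ⟨L0 ++ [ef], ?_, ?_, ?_, ⟨ef, List.getLast?_concat, hf⟩⟩
  · rw [List.nodup_append]
    refine ⟨hL0nd, List.nodup_singleton _, ?_⟩
    intro a ha b hb
    rw [List.mem_singleton] at hb
    subst hb
    exact (hL0mem.mp ha).2
  · rw [List.toFinset_append]
    have : L0.toFinset = E.erase ef := by
      apply Finset.ext
      intro a
      rw [List.mem_toFinset, hL0mem, Finset.mem_erase, and_comm]
    rw [this]
    simp only [List.toFinset_cons, List.toFinset_nil, insert_empty_eq]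
    rw [Finset.union_comm, ← Finset.insert_eq]
    exact Finset.insert_erase hef
  · intro i v hv
    rw [Finset.mem_insert]
    by_cases hi : (i : ℕ) < L0.length
    · -- element of the sorted part
      have hgi : (L0 ++ [ef]).get i = L0[(i : ℕ)] := by
        simp only [List.get_eq_getElem]
        exact List.getElem_append_left hi
      set e := L0[(i : ℕ)] with hedef
      have heL0 : e ∈ L0 := List.getElem_mem _
      have heE : e ∈ E := (hL0mem.mp heL0).1
      rw [hgi] at hv
      rcases hcov e heE v hv with rfl | ⟨e', he'E, hv'⟩
      · exact Or.inl rfl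
      · right
        have he'ne : e' ≠ ef := by
          rintro rfl
          have h2 : e'.2 = {Vtx.f} := f_mem_head (φ := φ) (hE he'E) hf
          rw [h2, Finset.mem_singleton] at hv'
          subst hv'
          exact f_not_mem_tail (φ := φ) (hE heE) hv
        have he'L0 : e' ∈ L0 := hL0mem.mpr ⟨he'E, he'ne⟩
        obtain ⟨k, hk⟩ := List.mem_iff_get.mp he'L0
        have hklt : (k : ℕ) < (i : ℕ) := by
          by_contra hcon
          push_neg at hcon
          rcases eq_or_lt_of_le hcon with heq | hlt
          · -- k = i : e' = e, contradiction with disjointness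
            have heq' : e' = e := by
              rw [← hk]
              simp only [List.get_eq_getElem, hedef]
              congr 1
              omega
            exact Finset.disjoint_left.mp ((Cphi φ).disj e (hE heE)) hv (heq' ▸ hv')
          · -- i < k : sortedness contradiction
            have hle1 : ekey e ≤ ekey e' := by
              have := hsorted.rel_get_of_lt (a := ⟨(i : ℕ), hi⟩) (b := k) hlt
              simpa [hedef, ← hk] using this
            have hlt2 : ekey e' < ekey e := ekey_lt (φ := φ) (hE heE) (hE he'E) hv hv'
            omega
        rw [mem_headsUnion]
        refine ⟨e', ?_, hv'⟩
        have htake : (L0 ++ [ef]).take (i : ℕ) = L0.take (i : ℕ) :=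
          List.take_append_of_le_length (le_of_lt hi)
        rw [htake]
        have : (L0.take (i : ℕ))[(k : ℕ)]'(by
          rw [List.length_take]
          exact lt_min hklt k.isLt) = L0[(k : ℕ)] := List.getElem_take
        rw [← hk]
        simp only [List.get_eq_getElem]
        rw [← this]
        exact List.getElem_mem _
    · -- the last element ef
      have hieq : (i : ℕ) = L0.length := by
        have h2 := i.isLt
        simp only [List.length_append, List.length_singleton] at h2
        omega
      have hgi : (L0 ++ [ef]).get i = ef := by
        simp only [List.get_eq_getElem]
        rw [List.getElem_append_right (le_of_eq hieq.symm)]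
        simp [hieq]
      rw [hgi] at hv
      rcases hcov ef hef v hv with rfl | ⟨e', he'E, hv'⟩
      · exact Or.inl rfl
      · right
        have he'ne : e' ≠ ef := by
          rintro rfl
          exact Finset.disjoint_left.mp ((Cphi φ).disj e' (hE he'E)) hv hv'
        have he'L0 : e' ∈ L0 := hL0mem.mpr ⟨he'E, he'ne⟩
        rw [mem_headsUnion]
        refine ⟨e', ?_, hv'⟩
        rw [hieq, List.take_left]
        exact he'L0
end Aux2
section Aux3

variable {V : Type*} [DecidableEq V]

lemma cov_of_ord {H' : DiHypergraph V} {s d : V} (h : HasOrdering H' s d) :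
    ∀ e ∈ H'.edges, ∀ v ∈ e.1, v = s ∨ ∃ e' ∈ H'.edges, v ∈ e'.2 := by
  obtain ⟨L, -, hLF, ht, -⟩ := h
  intro e he v hv
  rw [← hLF, List.mem_toFinset] at he
  obtain ⟨i, hi⟩ := List.mem_iff_get.mp he
  have hsub := ht i
  rw [hi] at hsub
  rcases Finset.mem_insert.mp (hsub hv) with h1 | h1
  · exact Or.inl h1
  · obtain ⟨e', he'tk, hv'⟩ := mem_headsUnion.mp h1
    exact Or.inr ⟨e', by
      rw [← hLF, List.mem_toFinset]; exact List.take_subset _ _ he'tk, hv'⟩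

lemma last_of_ord {H' : DiHypergraph V} {s d : V} (h : HasOrdering H' s d) :
    ∃ e ∈ H'.edges, d ∈ e.2 := by
  obtain ⟨L, -, hLF, -, e, hlast, hd⟩ := h
  refine ⟨e, ?_, hd⟩
  rw [← hLF, List.mem_toFinset]
  rw [List.getLast?_eq_some_iff] at hlast
  obtain ⟨l', rfl⟩ := hlast
  simp

variable {n m : ℕ} {φ : Fin m → Fin 3 → Fin n × Bool}

lemma removable {H' : DiHypergraph (Vtx n m)}
    (hp : IsHyperpath (Cphi φ) (Vtx.p 0) Vtx.f H') {er} (her : er ∈ H'.edges)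
    (hcov' : ∀ e ∈ H'.edges.erase er, ∀ v ∈ e.1,
        v = Vtx.p 0 ∨ ∃ e' ∈ H'.edges.erase er, v ∈ e'.2)
    (hf' : ∃ ef ∈ H'.edges.erase er, Vtx.f ∈ ef.2) : False := by
  obtain ⟨hsub, hord, hmin⟩ := hp
  obtain ⟨ef, hef, hff⟩ := hf'
  set H'' : DiHypergraph (Vtx n m) :=
    { verts := H'.verts
      edges := H'.edges.erase er
      tail_sub := fun e he => H'.tail_sub e (Finset.erase_subset _ _ he)
      head_sub := fun e he => H'.head_sub e (Finset.erase_subset _ _ he)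
      disj := fun e he => H'.disj e (Finset.erase_subset _ _ he) } with hH''
  have hEsub : H'.edges.erase er ⊆ (Cphi φ).edges :=
    fun e he => hsub.2 (Finset.erase_subset _ _ he)
  obtain ⟨L, h1, h2, h3, h4⟩ := ord_exists hEsub hcov' hef hff
  have heq : H'' = H' :=
    hmin H'' ⟨subset_rfl, Finset.erase_subset _ _⟩ ⟨L, h1, h2, h3, h4⟩
  have : er ∈ H'.edges.erase er := by
    have := congrArg DiHypergraph.edges heq
    rw [hH''] at this
    simp only at this
    rw [this]
    exact her
  exact Finset.notMem_erase er H'.edges this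

lemma varEdge_ne_q0Edge {i b} : varEdge φ i b ≠ q0Edge n m := by
  intro h
  simpa [varEdge, q0Edge] using congrArg Prod.fst h

lemma varEdge_ne_clauseEdge {i b} {x : Fin m} {y} : varEdge φ i b ≠ clauseEdge x y := by
  intro h
  simpa [varEdge, clauseEdge] using congrArg Prod.fst h

lemma head_inj {H' : DiHypergraph (Vtx n m)}
    (hp : IsHyperpath (Cphi φ) (Vtx.p 0) Vtx.f H') {e1 e2}
    (h1 : e1 ∈ H'.edges) (h2 : e2 ∈ H'.edges) (hh : e1.2 = e2.2) : e1 = e2 := by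
  by_contra hne
  refine removable hp h2 ?_ ?_
  · intro e he v hv
    rcases cov_of_ord hp.2.1 e (Finset.erase_subset _ _ he) v hv with h | ⟨e', he', hv'⟩
    · exact Or.inl h
    · by_cases hc : e' = e2
      · subst hc
        exact Or.inr ⟨e1, Finset.mem_erase.mpr ⟨hne, h1⟩, hh ▸ hv'⟩
      · exact Or.inr ⟨e', Finset.mem_erase.mpr ⟨hc, he'⟩, hv'⟩
  · obtain ⟨ef, hef, hf⟩ := last_of_ord hp.2.1
    by_cases hc : ef = e2
    · subst hc
      exact ⟨e1, Finset.mem_erase.mpr ⟨hne, h1⟩, hh ▸ hf⟩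
    · exact ⟨ef, Finset.mem_erase.mpr ⟨hc, hef⟩, hf⟩

lemma clause_unique {H' : DiHypergraph (Vtx n m)}
    (hp : IsHyperpath (Cphi φ) (Vtx.p 0) Vtx.f H') {x : Fin m} {y y''}
    (h1 : clauseEdge (n := n) x y ∈ H'.edges) (h2 : clauseEdge x y'' ∈ H'.edges) :
    y'' = y := by
  have heq : clauseEdge (n := n) x y'' = clauseEdge x y := head_inj hp h2 h1 rfl
  have := congrArg Prod.fst heq
  simp only [clauseEdge, Finset.singleton_inj, Vtx.q.injEq] at this
  exact this.2

lemma q0Edge_mem {H' : DiHypergraph (Vtx n m)}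
    (hp : IsHyperpath (Cphi φ) (Vtx.p 0) Vtx.f H')
    (hforced : forcedEdge n m ∈ H'.edges) : q0Edge n m ∈ H'.edges := by
  by_contra hq0
  refine removable hp hforced ?_ ?_
  · intro e he v hv
    rcases cov_of_ord hp.2.1 e (Finset.erase_subset _ _ he) v hv with h | ⟨e', he', hv'⟩
    · exact Or.inl h
    · by_cases hc : e' = forcedEdge n m
      · subst hc
        simp only [forcedEdge, Finset.mem_singleton] at hv'
        subst hv'
        have : e = q0Edge n m :=
          eq_of_q0_mem_tail (φ := φ) (hp.1.2 (Finset.erase_subset _ _ he)) hv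
        exact absurd (this ▸ Finset.erase_subset _ _ he) hq0
      · exact Or.inr ⟨e', Finset.mem_erase.mpr ⟨hc, he'⟩, hv'⟩
  · obtain ⟨ef, hef, hf⟩ := last_of_ord hp.2.1
    refine ⟨ef, Finset.mem_erase.mpr ⟨?_, hef⟩, hf⟩
    rintro rfl
    simp [forcedEdge] at hf

lemma clause_exists {H' : DiHypergraph (Vtx n m)}
    (hp : IsHyperpath (Cphi φ) (Vtx.p 0) Vtx.f H')
    (hforced : forcedEdge n m ∈ H'.edges) :
    ∀ (k : ℕ) (hk : k < m), ∃ j, clauseEdge (n := n) ⟨k, hk⟩ j ∈ H'.edges := by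
  intro k
  induction k with
  | zero =>
    intro hk
    by_contra hno
    push_neg at hno
    refine removable hp (q0Edge_mem hp hforced) ?_ ?_
    · intro e he v hv
      rcases cov_of_ord hp.2.1 e (Finset.erase_subset _ _ he) v hv with h | ⟨e', he', hv'⟩
      · exact Or.inl h
      · by_cases hc : e' = q0Edge n m
        · subst hc
          simp only [q0Edge, dif_pos hk, Finset.mem_insert, Finset.mem_singleton] at hv'
          rcases hv' with rfl | rfl | rfl <;>
          · have := eq_of_q_mem_tail (φ := φ) (hp.1.2 (Finset.erase_subset _ _ he)) hv
            exact absurd (this ▸ Finset.erase_subset _ _ he) (hno _)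
        · exact Or.inr ⟨e', Finset.mem_erase.mpr ⟨hc, he'⟩, hv'⟩
    · obtain ⟨ef, hef, hf⟩ := last_of_ord hp.2.1
      refine ⟨ef, Finset.mem_erase.mpr ⟨?_, hef⟩, hf⟩
      rintro rfl
      simp [q0Edge, dif_pos hk] at hf
  | succ k ih =>
    intro hk
    obtain ⟨j, hj⟩ := ih (by omega)
    by_contra hno
    push_neg at hno
    refine removable hp hj ?_ ?_
    · intro e he v hv
      rcases cov_of_ord hp.2.1 e (Finset.erase_subset _ _ he) v hv with h | ⟨e', he', hv'⟩
      · exact Or.inl h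
      · by_cases hc : e' = clauseEdge ⟨k, by omega⟩ j
        · subst hc
          have hlt : (k : ℕ) + 1 < m := hk
          simp only [clauseEdge, nextQ, dif_pos hlt, Finset.mem_insert,
            Finset.mem_singleton] at hv'
          rcases hv' with rfl | rfl | rfl <;>
          · have := eq_of_q_mem_tail (φ := φ) (hp.1.2 (Finset.erase_subset _ _ he)) hv
            exact absurd (this ▸ Finset.erase_subset _ _ he) (hno _)
        · exact Or.inr ⟨e', Finset.mem_erase.mpr ⟨hc, he'⟩, hv'⟩
    · obtain ⟨ef, hef, hf⟩ := last_of_ord hp.2.1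
      refine ⟨ef, Finset.mem_erase.mpr ⟨?_, hef⟩, hf⟩
      rintro rfl
      have hlt : (k : ℕ) + 1 < m := hk
      simp [clauseEdge, nextQ, dif_pos hlt] at hf

lemma noblock {H' : DiHypergraph (Vtx n m)}
    (hp : IsHyperpath (Cphi φ) (Vtx.p 0) Vtx.f H')
    (hforced : forcedEdge n m ∈ H'.edges) {kk : Fin n} {b} {x : Fin m} {y}
    (hvar : varEdge φ kk b ∈ H'.edges) (hq : Vtx.q x y ∈ (varEdge φ kk b).2)
    (hcl : clauseEdge x y ∈ H'.edges) : False := by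
  have hm : 0 < m := x.pos
  by_cases hx : (x : ℕ) = 0
  · -- remove q0Edge
    refine removable hp (q0Edge_mem hp hforced) ?_ ?_
    · intro e he v hv
      rcases cov_of_ord hp.2.1 e (Finset.erase_subset _ _ he) v hv with h | ⟨e', he', hv'⟩
      · exact Or.inl h
      · by_cases hc : e' = q0Edge n m
        · subst hc
          simp only [q0Edge, dif_pos hm, Finset.mem_insert, Finset.mem_singleton] at hv'
          have hx0 : x = ⟨0, hm⟩ := Fin.ext hx
          subst hx0
          rcases hv' with rfl | rfl | rfl <;>
          · have hecl := eq_of_q_mem_tail (φ := φ) (hp.1.2 (Finset.erase_subset _ _ he)) hv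
            have hy := clause_unique hp hcl (hecl ▸ Finset.erase_subset _ _ he)
            subst hy
            exact Or.inr ⟨varEdge φ kk b,
              Finset.mem_erase.mpr ⟨varEdge_ne_q0Edge, hvar⟩, hq⟩
        · exact Or.inr ⟨e', Finset.mem_erase.mpr ⟨hc, he'⟩, hv'⟩
    · obtain ⟨ef, hef, hf⟩ := last_of_ord hp.2.1
      refine ⟨ef, Finset.mem_erase.mpr ⟨?_, hef⟩, hf⟩
      rintro rfl
      simp [q0Edge, dif_pos hm] at hf
  · -- remove clauseEdge (x-1) j'
    have hx1 : (x : ℕ) - 1 < m := by omega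
    obtain ⟨j', hj'⟩ := clause_exists hp hforced ((x : ℕ) - 1) hx1
    refine removable hp hj' ?_ ?_
    · intro e he v hv
      rcases cov_of_ord hp.2.1 e (Finset.erase_subset _ _ he) v hv with h | ⟨e', he', hv'⟩
      · exact Or.inl h
      · by_cases hc : e' = clauseEdge ⟨(x : ℕ) - 1, hx1⟩ j'
        · subst hc
          have hlt : (x : ℕ) - 1 + 1 < m := by omega
          simp only [clauseEdge, nextQ, dif_pos hlt, Finset.mem_insert,
            Finset.mem_singleton] at hv'
          have hx0 : x = ⟨(x : ℕ) - 1 + 1, hlt⟩ := by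
            apply Fin.ext
            show (x : ℕ) = (x : ℕ) - 1 + 1
            omega
          rw [← hx0] at hv'
          rcases hv' with rfl | rfl | rfl <;>
          · have hecl := eq_of_q_mem_tail (φ := φ) (hp.1.2 (Finset.erase_subset _ _ he)) hv
            have hy := clause_unique hp hcl (hecl ▸ Finset.erase_subset _ _ he)
            subst hy
            refine Or.inr ⟨varEdge φ kk b,
              Finset.mem_erase.mpr ⟨varEdge_ne_clauseEdge, hvar⟩, hq⟩
        · exact Or.inr ⟨e', Finset.mem_erase.mpr ⟨hc, he'⟩, hv'⟩
    · obtain ⟨ef, hef, hf⟩ := last_of_ord hp.2.1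
      refine ⟨ef, Finset.mem_erase.mpr ⟨?_, hef⟩, hf⟩
      rintro rfl
      have hlt : (x : ℕ) - 1 + 1 < m := by omega
      simp [clauseEdge, nextQ, dif_pos hlt] at hf

end Aux3
section Aux4

variable {V : Type*} [DecidableEq V]

lemma path_first {H' : DiHypergraph V} {v d : V} {vs es} (pf : PathFrom H' v d vs es) :
    ∃ e ∈ H'.edges, v ∈ e.1 := by
  cases pf with
  | single he hs hd => exact ⟨_, he, hs⟩
  | cons he hs hv pf => exact ⟨_, he, hs⟩

variable {n m : ℕ} {φ : Fin m → Fin 3 → Fin n × Bool}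

lemma path_not_from_f {H' : DiHypergraph (Vtx n m)} (hsub : H'.edges ⊆ (Cphi φ).edges)
    {d vs es} (pf : PathFrom H' Vtx.f d vs es) : False := by
  obtain ⟨e, he, hm⟩ := path_first pf
  exact f_not_mem_tail (φ := φ) (hsub he) hm

lemma path_clause_mem {H' : DiHypergraph (Vtx n m)} (hsub : H'.edges ⊆ (Cphi φ).edges)
    {x : Fin m} {y d vs es} (pf : PathFrom H' (Vtx.q x y) d vs es) :
    clauseEdge (n := n) x y ∈ H'.edges := by
  obtain ⟨e, he, hm⟩ := path_first pf
  exact (eq_of_q_mem_tail (φ := φ) (hsub he) hm) ▸ he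

lemma path_from_q {H' : DiHypergraph (Vtx n m)} (hsub : H'.edges ⊆ (Cphi φ).edges)
    {v d : Vtx n m} {vs es} (pf : PathFrom H' v d vs es) :
    d = Vtx.f → ∀ (x : Fin m) (y : Fin 3), v = Vtx.q x y →
      (∀ i : Fin m, (x : ℕ) ≤ (i : ℕ) → ∃! j, Vtx.q i j ∈ vs) ∧
      (∀ i : Fin m, (i : ℕ) < (x : ℕ) → ∀ j, Vtx.q i j ∉ vs) := by
  induction pf with
  | single he hs hd =>
    intro hdf x y hxy
    subst hdf
    subst hxy
    have hecl : _ = clauseEdge x y := eq_of_q_mem_tail (φ := φ) (hsub he) hs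
    subst hecl
    simp only [clauseEdge, nextQ] at hd
    split at hd
    · simp at hd
    · rename_i hnm
      constructor
      · intro i hi
        have hix : i = x := by
          apply Fin.ext
          have := i.isLt
          omega
        subst hix
        refine ⟨y, by simp, ?_⟩
        intro j hj
        simp only [List.mem_cons, List.mem_singleton, List.not_mem_nil, or_false] at hj
        rcases hj with hj | hj
        · injection hj with h1 h2
        · exact absurd hj (by simp)
      · intro i hi j hj
        simp only [List.mem_cons, List.mem_singleton, List.not_mem_nil, or_false] at hj
        rcases hj with hj | hj
        · injection hj with h1 h2
          omega
        · exact absurd hj (by simp)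
  | cons he hs hv pf ih =>
    intro hdf x y hxy
    subst hxy
    have hecl : _ = clauseEdge x y := eq_of_q_mem_tail (φ := φ) (hsub he) hs
    subst hecl
    simp only [clauseEdge, nextQ] at hv
    split at hv
    · rename_i hnm
      simp only [Finset.mem_insert, Finset.mem_singleton] at hv
      rcases hv with rfl | rfl | rfl <;>
      · obtain ⟨A, B⟩ := ih hdf ⟨(x : ℕ) + 1, hnm⟩ _ rfl
        constructor
        · intro i hi
          by_cases hix : i = x
          · subst hix
            refine ⟨y, List.mem_cons.mpr (Or.inl rfl), ?_⟩
            intro j hj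
            rcases List.mem_cons.mp hj with hj | hj
            · injection hj with h1 h2
            · exact absurd hj (B i (by simp) j)
          · have hxi : (x : ℕ) + 1 ≤ (i : ℕ) := by
              rcases Nat.lt_or_ge (x : ℕ) (i : ℕ) with h | h
              · omega
              · exact absurd (Fin.ext (by omega)) hix
            obtain ⟨j, hj, hju⟩ := A i hxi
            refine ⟨j, List.mem_cons.mpr (Or.inr hj), ?_⟩
            intro j' hj'
            rcases List.mem_cons.mp hj' with hj' | hj'
            · injection hj' with h1 h2
              exact absurd (Fin.ext (congrArg Fin.val h1)) hix
            · exact hju j' hj'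
        · intro i hi j hj
          rcases List.mem_cons.mp hj with hj | hj
          · injection hj with h1 h2
            have := congrArg Fin.val h1
            omega
          · exact B i (by simp; omega) j hj
    · rw [Finset.mem_singleton] at hv
      subst hv
      exact (path_not_from_f hsub pf).elim

lemma path_from_q0 {H' : DiHypergraph (Vtx n m)} (hsub : H'.edges ⊆ (Cphi φ).edges)
    {v d : Vtx n m} {vs es} (pf : PathFrom H' v d vs es) :
    d = Vtx.f → v = Vtx.q0 → ∀ i : Fin m, ∃! j, Vtx.q i j ∈ vs := by
  cases pf with
  | single he hs hd =>
    intro hdf hv0 i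
    subst hdf
    subst hv0
    have hecl : _ = q0Edge n m := eq_of_q0_mem_tail (φ := φ) (hsub he) hs
    subst hecl
    simp only [q0Edge] at hd
    split at hd
    · simp at hd
    · exact absurd i.isLt (by omega)
  | cons he hs hv pf =>
    intro hdf hv0 i
    subst hdf
    subst hv0
    have hecl : _ = q0Edge n m := eq_of_q0_mem_tail (φ := φ) (hsub he) hs
    subst hecl
    simp only [q0Edge] at hv
    split at hv
    · rename_i hm
      simp only [Finset.mem_insert, Finset.mem_singleton] at hv
      rcases hv with rfl | rfl | rfl <;>
      · obtain ⟨A, B⟩ := path_from_q hsub pf rfl ⟨0, hm⟩ _ rfl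
        obtain ⟨j, hj, hju⟩ := A i (Nat.zero_le _)
        refine ⟨j, List.mem_cons.mpr (Or.inr hj), ?_⟩
        intro j' hj'
        rcases List.mem_cons.mp hj' with hj' | hj'
        · exact absurd hj' (by simp)
        · exact hju j' hj'
    · exact absurd i.isLt (by omega)

lemma path_from_p {H' : DiHypergraph (Vtx n m)}
    (hp : IsHyperpath (Cphi φ) (Vtx.p 0) Vtx.f H')
    (hforced : forcedEdge n m ∈ H'.edges) {v d : Vtx n m} {vs es}
    (pf : PathFrom H' v d vs es) :
    d = Vtx.f → ∀ k : Fin (n + 1), v = Vtx.p k → ∀ i : Fin m, ∃! j, Vtx.q i j ∈ vs := by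
  have hsub := hp.1.2
  induction pf with
  | single he hs hd =>
    intro hdf k hk i
    subst hdf
    subst hk
    rcases p_mem_tail_cases (φ := φ) (hsub he) hs with ⟨i', b, rfl, -⟩ | ⟨rfl, -⟩
    · rcases mem_head_varEdge.mp hd with h' | ⟨x, y, _, h'⟩ <;> simp at h'
    · simp [forcedEdge] at hd
  | cons he hs hv pf ih =>
    intro hdf k hk i
    subst hdf
    subst hk
    rcases p_mem_tail_cases (φ := φ) (hsub he) hs with ⟨i', b, rfl, -⟩ | ⟨rfl, -⟩
    · rcases mem_head_varEdge.mp hv with rfl | ⟨x, y, hxy, rfl⟩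
      · obtain ⟨j, hj, hju⟩ := ih rfl i'.succ rfl i
        refine ⟨j, List.mem_cons.mpr (Or.inr hj), ?_⟩
        intro j' hj'
        rcases List.mem_cons.mp hj' with hj' | hj'
        · exact absurd hj' (by simp)
        · exact hju j' hj'
      · exact (noblock hp hforced he hv (path_clause_mem hsub pf)).elim
    · simp only [forcedEdge, Finset.mem_singleton] at hv
      subst hv
      obtain ⟨j, hj, hju⟩ := path_from_q0 hsub pf rfl rfl i
      refine ⟨j, List.mem_cons.mpr (Or.inr hj), ?_⟩
      intro j' hj'
      rcases List.mem_cons.mp hj' with hj' | hj'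
      · exact absurd hj' (by simp)
      · exact hju j' hj'

lemma var_chain {H' : DiHypergraph (Vtx n m)}
    (hp : IsHyperpath (Cphi φ) (Vtx.p 0) Vtx.f H')
    (hforced : forcedEdge n m ∈ H'.edges) :
    ∀ (k : ℕ), k ≤ n → ∃ e ∈ H'.edges, Vtx.p ⟨n - k, by omega⟩ ∈ e.1 := by
  intro k
  induction k with
  | zero =>
    intro hk
    refine ⟨forcedEdge n m, hforced, ?_⟩
    have hl : (⟨n - 0, by omega⟩ : Fin (n + 1)) = Fin.last n := by
      apply Fin.ext
      show n - 0 = n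
      omega
    rw [hl]
    simp [forcedEdge]
  | succ k ih =>
    intro hk
    obtain ⟨e, he, hv⟩ := ih (by omega)
    rcases cov_of_ord hp.2.1 e he _ hv with h | ⟨e', he', hv'⟩
    · exfalso
      injection h with h'
      have := congrArg Fin.val h'
      simp only [Fin.val_zero] at this
      omega
    · obtain ⟨i, b, rfl, hk'⟩ := p_mem_head (φ := φ) (hp.1.2 he') hv'
      refine ⟨varEdge φ i b, he', ?_⟩
      simp only [varEdge, Finset.mem_singleton, Vtx.p.injEq]
      apply Fin.ext
      have hval := congrArg Fin.val hk'
      simp only [Fin.val_succ] at hval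
      show n - (k + 1) = (i.castSucc : ℕ)
      simp only [Fin.coe_castSucc]
      omega

end Aux4

/-- Any hyperpath from `p_0` to `f` in `C(φ)` containing the forced edge
contains all the vertices `p_0, …, p_n` and `q_0`, and for each clause `i`
exactly one of the vertices `q_{i,1}, q_{i,2}, q_{i,3}` lies on its (unique)
`p_0`-to-`f` path. -/
theorem cphi_hyperpath_vertices {n m : ℕ} (φ : Fin m → Fin 3 → Fin n × Bool)
    (H' : DiHypergraph (Vtx n m))
    (hp : IsHyperpath (Cphi φ) (Vtx.p 0) Vtx.f H')
    (hforced : forcedEdge n m ∈ H'.edges) :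
    (∀ i : Fin (n + 1), Vtx.p i ∈ H'.verts) ∧ Vtx.q0 ∈ H'.verts ∧
    (∀ (vs : List (Vtx n m)) (es : List (Finset (Vtx n m) × Finset (Vtx n m))),
      PathFrom H' (Vtx.p 0) Vtx.f vs es →
      ∀ i : Fin m, ∃! j : Fin 3, Vtx.q i j ∈ vs) := by
  obtain ⟨hsub, hord, hmin⟩ := id hp
  refine ⟨?_, ?_, ?_⟩
  · intro i
    have hin : (i : ℕ) ≤ n := by omega
    obtain ⟨e, he, hv⟩ := var_chain hp hforced (n - (i : ℕ)) (by omega)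
    have hieq : (⟨n - (n - (i : ℕ)), by omega⟩ : Fin (n + 1)) = i := by
      apply Fin.ext
      show n - (n - (i : ℕ)) = (i : ℕ)
      omega
    rw [hieq] at hv
    exact H'.tail_sub e he hv
  · exact H'.head_sub _ hforced (by simp [forcedEdge])
  · intro vs es hpath i
    exact path_from_p hp hforced hpath rfl 0 rfl i
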